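/- arXiv:2205.02620 — 3 statements merged into one kernel-verified Lean document; each statement's English description precedes it below -/
import Mathlib

section
/- Any optimal bandwidth allocation W_s* for the semantic stream in the OMA bit-rate maximization problem satisfies W^low ≤ W_s* ≤ W^up, where W^low = S̄·K·L/I and W^up = min(S̄·K·L/(ε̄·I), W). (Lemma 1 of the paper.) -/
/-!
Suppose the optimal semantic bandwidth `W_s*` exceeded `U = S̄KL/(ε̄I)`. At bandwidth `U` the
rate constraint reduces to the similarity constraint, and shrinking the bandwidth only raises the
SNR argument of `ε`, so the semantic stream can move to bandwidth `U` with power at most `p_s*`,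
and strictly below `P` (if `p_s* = P`, the strict gain in `ε` leaves room, by continuity, to lower
the power). The bit stream then gets strictly more bandwidth and a positive power budget, and
`t ↦ t log(1 + a/t)` is strictly increasing, so its rate strictly increases: a contradiction.
The lower bound is the rate constraint together with `ε ≤ 1`.
-/

open Real Set Filter Topology

-- At `t = 0` the junk value `a / 0 = 0` gives `0`, which is also the limit as `t → 0⁺`.
theorem Real.strictMonoOn_mul_log_one_add_div {a : ℝ} (ha : 0 < a) :
    StrictMonoOn (fun t => t * log (1 + a / t)) (Ici 0) := by
  intro t₁ ht₁ t₂ ht₂ h₁₂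
  have ht₂ : 0 < t₂ := lt_of_le_of_lt ht₁ h₁₂
  rcases (mem_Ici.mp ht₁).eq_or_lt with rfl | ht₁
  · simpa using mul_pos ht₂ (log_pos (by simpa using div_pos ha ht₂))
  -- concavity of `log` between `1 + a/t₁` and `1`, with weight `t₁/t₂`
  have hw : 0 < t₁ / t₂ := div_pos ht₁ ht₂
  have hw' : 0 < 1 - t₁ / t₂ := by rw [sub_pos, div_lt_one ht₂]; exact h₁₂
  have hx : (0 : ℝ) < 1 + a / t₁ := by positivity
  have hx1 : 1 + a / t₁ ≠ 1 := by simpa using (div_pos ha ht₁).ne'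
  have hconc := strictConcaveOn_log_Ioi.2 hx (mem_Ioi.mpr one_pos) hx1 hw hw' (by ring)
  have hmid : t₁ / t₂ * (1 + a / t₁) + (1 - t₁ / t₂) * 1 = 1 + a / t₂ := by
    field_simp; ring
  simp only [smul_eq_mul, log_one, mul_zero, add_zero, hmid] at hconc
  calc t₁ * log (1 + a / t₁) = t₂ * (t₁ / t₂ * log (1 + a / t₁)) := by field_simp
    _ < t₂ * log (1 + a / t₂) := mul_lt_mul_of_pos_left hconc ht₂

theorem Real.mul_logb_one_add_div_lt {t₁ t₂ q₁ q₂ : ℝ} (ht₁ : 0 ≤ t₁) (ht : t₁ < t₂)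
    (hq₁ : 0 ≤ q₁) (hq : q₁ ≤ q₂) (hq₂ : 0 < q₂) :
    t₁ * logb 2 (1 + q₁ / t₁) < t₂ * logb 2 (1 + q₂ / t₂) := by
  have hlog := strictMonoOn_mul_log_one_add_div hq₂ (mem_Ici.mpr ht₁)
    (mem_Ici.mpr (ht₁.trans ht.le)) ht
  calc t₁ * logb 2 (1 + q₁ / t₁) ≤ t₁ * logb 2 (1 + q₂ / t₁) := by
        gcongr
        norm_num
    _ = t₁ * log (1 + q₂ / t₁) / log 2 := by rw [logb, mul_div_assoc]
    _ < t₂ * log (1 + q₂ / t₂) / log 2 := div_lt_div_of_pos_right hlog (log_pos one_lt_two)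
    _ = t₂ * logb 2 (1 + q₂ / t₂) := by rw [logb, mul_div_assoc]

theorem StrictMono.exists_le_of_le_comp_mul {ε : ℝ → ℝ} (hmono : StrictMono ε)
    (hcont : Continuous ε) {c c' q P e : ℝ} (hc : c' < c)
    (hq : 0 ≤ q) (hqP : q ≤ P) (hP : 0 < P) (he : e ≤ ε (q * c')) :
    ∃ p, 0 ≤ p ∧ p ≤ q ∧ p < P ∧ e ≤ ε (p * c) := by
  rcases hqP.lt_or_eq with hqP | rfl
  · exact ⟨q, hq, le_rfl, hqP, he.trans (hmono.monotone (by gcongr))⟩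
  have hgain : e < ε (q * c) := he.trans_lt (hmono (by gcongr))
  have hnear : ∀ᶠ p in 𝓝 q, 0 < p ∧ e < ε (p * c) :=
    (lt_mem_nhds hP).and <|
      ((hcont.comp (continuous_mul_const c)).tendsto q).eventually (lt_mem_nhds hgain)
  obtain ⟨p, hpq, hp, hep⟩ := hnear.exists_lt
  exact ⟨p, hp.le, hpq.le, hpq, hep.le⟩

theorem oma_optimal_bandwidth_bounds_general (W P I K L hs hb N0 Sbar εbar : ℝ)
    (hP : 0 < P) (hI : 0 < I) (hK : 0 < K) (hL : 0 < L)
    (hhs : 0 < hs) (hhb : 0 < hb) (hN0 : 0 < N0)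
    (hSb : 0 < Sbar) (hεb : 0 < εbar)
    (ε : ℝ → ℝ) (hmono : StrictMono ε) (hcont : Continuous ε)
    (hbd : ∀ x, 0 ≤ ε x ∧ ε x ≤ 1)
    (feasible : ℝ → ℝ → Prop)
    (hfeas : ∀ Ws ps, feasible Ws ps ↔
      0 ≤ Ws ∧ Ws ≤ W ∧ 0 ≤ ps ∧ ps ≤ P ∧
      Ws * I / (K * L) * ε (ps * hs / (Ws * N0)) ≥ Sbar ∧
      ε (ps * hs / (Ws * N0)) ≥ εbar)
    (obj : ℝ → ℝ → ℝ)
    (hobj : ∀ Ws ps, obj Ws ps =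
      (W - Ws) * Real.logb 2 (1 + (P - ps) * hb / ((W - Ws) * N0)))
    (Wsopt psopt : ℝ)
    (hopt : feasible Wsopt psopt ∧ ∀ Ws ps, feasible Ws ps → obj Ws ps ≤ obj Wsopt psopt) :
    Sbar * K * L / I ≤ Wsopt ∧ Wsopt ≤ min (Sbar * K * L / (εbar * I)) W := by
  obtain ⟨hfopt, hmax⟩ := hopt
  obtain ⟨hWs0, hWsW, hps0, hpsP, hrate, hsim⟩ := (hfeas _ _).mp hfopt
  have hlow : Sbar * K * L / I ≤ Wsopt := by
    have := hrate.trans (mul_le_of_le_one_right (by positivity) (hbd _).2)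
    rw [div_le_iff₀ hI]
    rwa [le_div_iff₀ (by positivity), ← mul_assoc] at this
  refine ⟨hlow, le_min (not_lt.mp fun hUWs => ?_) hWsW⟩
  set U := Sbar * K * L / (εbar * I)
  have hU : 0 < U := by positivity
  obtain ⟨p, hp0, hp, hpP, hεp⟩ := hmono.exists_le_of_le_comp_mul hcont
    (c' := hs / (Wsopt * N0)) (c := hs / (U * N0)) (e := εbar) (by gcongr) hps0 hpsP hP
    (by rwa [← mul_div_assoc])
  rw [← mul_div_assoc] at hεp
  have hrateU : Sbar ≤ U * I / (K * L) * ε (p * hs / (U * N0)) := by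
    have hUI : U * I / (K * L) = Sbar / εbar := by simp only [U]; field_simp
    rw [hUI, div_mul_eq_mul_div, le_div_iff₀ hεb]
    exact mul_le_mul_of_nonneg_left hεp hSb.le
  have hfU : feasible U p :=
    (hfeas _ _).mpr ⟨hU.le, hUWs.le.trans hWsW, hp0, hpP.le, hrateU, hεp⟩
  have hgain : obj Wsopt psopt < obj U p := by
    rw [hobj, hobj]
    simpa only [div_div, mul_comm N0] using
      mul_logb_one_add_div_lt (sub_nonneg.mpr hWsW) (sub_lt_sub_left hUWs W)
        (div_nonneg (mul_nonneg (sub_nonneg.mpr hpsP) hhb.le) hN0.le)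
        (div_le_div_of_nonneg_right (by gcongr) hN0.le)
        (div_pos (mul_pos (sub_pos.mpr hpP) hhb) hN0)
  exact (hmax U p hfU).not_gt hgain

theorem oma_optimal_bandwidth_bounds (W P I K L hs hb N0 Sbar εbar : ℝ)
    (hW : 0 < W) (hP : 0 < P) (hI : 0 < I) (hK : 0 < K) (hL : 0 < L)
    (hhs : 0 < hs) (hhb : 0 < hb) (hN0 : 0 < N0)
    (hSb : 0 < Sbar) (hεb : 0 < εbar) (hεb1 : εbar ≤ 1)
    (ε : ℝ → ℝ) (hmono : StrictMono ε) (hcont : Continuous ε)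
    (hbd : ∀ x, 0 ≤ ε x ∧ ε x ≤ 1)
    (hSmax : Sbar ≤ W * I / (K * L) * ε (P * hs / (W * N0)))
    (feasible : ℝ → ℝ → Prop)
    (hfeas : ∀ Ws ps, feasible Ws ps ↔
      0 ≤ Ws ∧ Ws ≤ W ∧ 0 ≤ ps ∧ ps ≤ P ∧
      Ws * I / (K * L) * ε (ps * hs / (Ws * N0)) ≥ Sbar ∧
      ε (ps * hs / (Ws * N0)) ≥ εbar)
    (obj : ℝ → ℝ → ℝ)
    (hobj : ∀ Ws ps, obj Ws ps =
      (W - Ws) * Real.logb 2 (1 + (P - ps) * hb / ((W - Ws) * N0)))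
    (Wsopt psopt : ℝ)
    (hopt : feasible Wsopt psopt ∧ ∀ Ws ps, feasible Ws ps → obj Ws ps ≤ obj Wsopt psopt) :
    Sbar * K * L / I ≤ Wsopt ∧ Wsopt ≤ min (Sbar * K * L / (εbar * I)) W :=
  oma_optimal_bandwidth_bounds_general W P I K L hs hb N0 Sbar εbar hP hI hK hL hhs hhb hN0 hSb hεb
    ε hmono hcont hbd feasible hfeas obj hobj Wsopt psopt hopt
end

section
/- The water-filling solution is optimal: for W₁, W₂, h₁, h₂ > 0 and R̄ > 0, the pair (p̃₁, p̃₂) with p̃ᵢ = λ·Wᵢ - 1/hᵢ and λ = 2^{R̄/(W₁+W₂)}/((W₁h₁)^{W₁/(W₁+W₂)}(W₂h₂)^{W₂/(W₁+W₂)}), when both components are nonnegative, minimizes p₁ + p₂ among all p₁, p₂ ≥ 0 satisfying W₁·log₂(1 + h₁·p₁) + W₂·log₂(1 + h₂·p₂) ≥ R̄. -/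
/-!
Write `xᵢ = 1 + hᵢ pᵢ` and `yᵢ = 1 + hᵢ q̃ᵢ = λ Wᵢ hᵢ`. The water level `λ` is chosen so that
`W₁ log y₁ + W₂ log y₂ = R̄ log 2`, i.e. the water-filling point meets the rate constraint with
equality. Concavity of `log` at `yᵢ` gives `λ Wᵢ (log xᵢ - log yᵢ) ≤ pᵢ - q̃ᵢ`; summing, the left
side is `λ` times the rate surplus of `p`, which is nonnegative for feasible `p`.
-/

open Real

lemma log_sub_log_le_div {x y : ℝ} (hx : 0 < x) (hy : 0 < y) :
    log x - log y ≤ (x - y) / y := by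
  have h := log_le_sub_one_of_pos (div_pos hx hy)
  rwa [log_div hx.ne' hy.ne', div_sub_one hy.ne'] at h

lemma mul_mul_log_sub_log_le_sub {W h lam p : ℝ} (hW : 0 < W) (hh : 0 < h) (hlam : 0 < lam)
    (hp : 0 < 1 + h * p) :
    lam * W * (log (1 + h * p) - log (lam * W * h)) ≤ p - (lam * W - 1 / h) := by
  have hy : 0 < lam * W * h := by positivity
  calc lam * W * (log (1 + h * p) - log (lam * W * h))
      ≤ lam * W * ((1 + h * p - lam * W * h) / (lam * W * h)) :=
        mul_le_mul_of_nonneg_left (log_sub_log_le_div hp hy) (by positivity)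
    _ = p - (lam * W - 1 / h) := by field_simp; ring

noncomputable def waterLevel (W1 W2 h1 h2 R : ℝ) : ℝ :=
  (2 : ℝ) ^ (R / (W1 + W2)) / ((W1 * h1) ^ (W1 / (W1 + W2)) * (W2 * h2) ^ (W2 / (W1 + W2)))

section WaterLevel

variable {W1 W2 h1 h2 : ℝ} (R : ℝ)

lemma waterLevel_pos (h1W1 : 0 < W1 * h1) (h2W2 : 0 < W2 * h2) :
    0 < waterLevel W1 W2 h1 h2 R := by
  unfold waterLevel
  positivity

lemma mul_log_add_mul_log_waterLevel (hW1 : 0 < W1) (hW2 : 0 < W2) (hh1 : 0 < h1)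
    (hh2 : 0 < h2) :
    W1 * log (waterLevel W1 W2 h1 h2 R * W1 * h1) +
      W2 * log (waterLevel W1 W2 h1 h2 R * W2 * h2) = R * log 2 := by
  have hA : 0 < W1 * h1 := mul_pos hW1 hh1
  have hB : 0 < W2 * h2 := mul_pos hW2 hh2
  have hL := waterLevel_pos R hA hB
  have hlog_level : log (waterLevel W1 W2 h1 h2 R) = R / (W1 + W2) * log 2
      - W1 / (W1 + W2) * log (W1 * h1) - W2 / (W1 + W2) * log (W2 * h2) := by
    unfold waterLevel
    rw [log_div (by positivity) (by positivity), log_mul (by positivity) (by positivity),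
      log_rpow two_pos, log_rpow hA, log_rpow hB]
    ring
  rw [mul_assoc, mul_assoc, log_mul hL.ne' hA.ne', log_mul hL.ne' hB.ne', hlog_level]
  field_simp
  ring

end WaterLevel

theorem waterfilling_optimal_general (W1 W2 h1 h2 Rbar : ℝ)
    (hW1 : 0 < W1) (hW2 : 0 < W2) (hh1 : 0 < h1) (hh2 : 0 < h2)
    (lam q1 q2 : ℝ)
    (hlam : lam = (2 : ℝ) ^ (Rbar / (W1 + W2)) /
      ((W1 * h1) ^ (W1 / (W1 + W2)) * (W2 * h2) ^ (W2 / (W1 + W2))))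
    (hq1 : q1 = lam * W1 - 1 / h1) (hq2 : q2 = lam * W2 - 1 / h2) :
    ∀ p1 p2 : ℝ, 0 ≤ p1 → 0 ≤ p2 →
      W1 * Real.logb 2 (1 + h1 * p1) + W2 * Real.logb 2 (1 + h2 * p2) ≥ Rbar →
      q1 + q2 ≤ p1 + p2 := by
  intro p1 p2 hp1 hp2 hrate
  change lam = waterLevel W1 W2 h1 h2 Rbar at hlam
  have hlam_pos : 0 < lam := hlam ▸ waterLevel_pos Rbar (mul_pos hW1 hh1) (mul_pos hW2 hh2)
  have hlevel := hlam ▸ mul_log_add_mul_log_waterLevel Rbar hW1 hW2 hh1 hh2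
  have hrate_log : Rbar * log 2 ≤ W1 * log (1 + h1 * p1) + W2 * log (1 + h2 * p2) := by
    rw [ge_iff_le, ← log_div_log, ← log_div_log, mul_div_assoc', mul_div_assoc', ← add_div,
      le_div_iff₀ (log_pos one_lt_two)] at hrate
    exact hrate
  have hgain1 := mul_mul_log_sub_log_le_sub hW1 hh1 hlam_pos (by positivity : 0 < 1 + h1 * p1)
  have hgain2 := mul_mul_log_sub_log_le_sub hW2 hh2 hlam_pos (by positivity : 0 < 1 + h2 * p2)
  have hsurplus : 0 ≤ lam * (W1 * (log (1 + h1 * p1) - log (lam * W1 * h1)) +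
      W2 * (log (1 + h2 * p2) - log (lam * W2 * h2))) :=
    mul_nonneg hlam_pos.le (by linarith)
  subst hq1 hq2
  linarith

theorem waterfilling_optimal (W1 W2 h1 h2 Rbar : ℝ)
    (hW1 : 0 < W1) (hW2 : 0 < W2) (hh1 : 0 < h1) (hh2 : 0 < h2) (hR : 0 < Rbar)
    (lam q1 q2 : ℝ)
    (hlam : lam = (2 : ℝ) ^ (Rbar / (W1 + W2)) /
      ((W1 * h1) ^ (W1 / (W1 + W2)) * (W2 * h2) ^ (W2 / (W1 + W2))))
    (hq1 : q1 = lam * W1 - 1 / h1) (hq2 : q2 = lam * W2 - 1 / h2)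
    (hq1n : 0 ≤ q1) (hq2n : 0 ≤ q2) :
    ∀ p1 p2 : ℝ, 0 ≤ p1 → 0 ≤ p2 →
      W1 * Real.logb 2 (1 + h1 * p1) + W2 * Real.logb 2 (1 + h2 * p2) ≥ Rbar →
      q1 + q2 ≤ p1 + p2 :=
  waterfilling_optimal_general W1 W2 h1 h2 Rbar hW1 hW2 hh1 hh2 lam q1 q2 hlam hq1 hq2
end

section
/- The minimum NOMA transmit power P_min^N(S̄, ε̄, R̄) = p_s* + ((p_s*·g + W·N₀)/g)·(2^{R̄/W} - 1), where p_s* is the minimal power satisfying the semantic constraints, is the optimal value of the problem: minimize p_s + p_b subject to p_s ≥ p_s*, p_b ≥ 0, and W·log₂(1 + p_b·g/(p_s·g + W·N₀)) ≥ R̄. -/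
/-! Inverting the logarithm, the rate constraint says exactly
`pb ≥ (ps g + W N₀) / g · (2^{R̄/W} - 1)`. This bound grows with `ps` because `R̄ > 0`,
so the total power is least when both `ps = p_s*` and the rate constraint are tight. -/

open Real

theorem le_mul_logb_one_add_iff {b W R x : ℝ} (hb : 1 < b) (hW : 0 < W) (hx : 0 < 1 + x) :
    R ≤ W * logb b (1 + x) ↔ b ^ (R / W) - 1 ≤ x := by
  rw [← div_le_iff₀' hW, le_logb_iff_rpow_le hb hx, sub_le_iff_le_add']

theorem le_mul_logb_one_add_mul_div_iff {b W R D g p : ℝ} (hb : 1 < b) (hW : 0 < W)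
    (hD : 0 < D) (hg : 0 < g) (hp : 0 ≤ p) :
    R ≤ W * logb b (1 + p * g / D) ↔ D / g * (b ^ (R / W) - 1) ≤ p := by
  rw [le_mul_logb_one_add_iff hb hW (by positivity), le_div_iff₀ hD,
    div_mul_eq_mul_div, div_le_iff₀ hg, mul_comm D]

theorem noma_min_power (W N0 g Rbar pss : ℝ)
    (hW : 0 < W) (hN0 : 0 < N0) (hg : 0 < g) (hR : 0 < Rbar) (hpss : 0 ≤ pss) :
    IsLeast {t : ℝ | ∃ ps pb : ℝ, pss ≤ ps ∧ 0 ≤ pb ∧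
        W * Real.logb 2 (1 + pb * g / (ps * g + W * N0)) ≥ Rbar ∧ t = ps + pb}
      (pss + (pss * g + W * N0) / g * ((2 : ℝ) ^ (Rbar / W) - 1)) := by
  have hgap : 0 ≤ (2 : ℝ) ^ (Rbar / W) - 1 :=
    sub_nonneg.2 (one_le_rpow one_le_two (by positivity))
  have hrate {ps pb : ℝ} (hps : pss ≤ ps) (hpb : 0 ≤ pb) :
      W * logb 2 (1 + pb * g / (ps * g + W * N0)) ≥ Rbar ↔
        (ps * g + W * N0) / g * ((2 : ℝ) ^ (Rbar / W) - 1) ≤ pb :=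
    have hps0 : 0 ≤ ps := hpss.trans hps
    le_mul_logb_one_add_mul_div_iff one_lt_two hW (by positivity) hg hpb
  constructor
  · exact ⟨pss, _, le_rfl, by positivity, (hrate le_rfl (by positivity)).2 le_rfl, rfl⟩
  · rintro _ ⟨ps, pb, hps, hpb, hfeasible, rfl⟩
    have hpb_min := (hrate hps hpb).1 hfeasible
    have hmono : (pss * g + W * N0) / g * ((2 : ℝ) ^ (Rbar / W) - 1) ≤
        (ps * g + W * N0) / g * ((2 : ℝ) ^ (Rbar / W) - 1) := by
      gcongr
    linarith
end
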